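/- arXiv:2102.07117 — 2 statements merged into one kernel-verified Lean document; each statement's English description precedes it below -/
import Mathlib

section
/- Let N ≥ 3, let Ω ⊂ ℝ^N be an open set, let p > 1 and σ < 1 be real numbers, and let u : Ω → ℝ be twice continuously differentiable and positive on Ω with −Δu(x) + σ·‖∇u(x)‖²/u(x) ≥ u(x)^p for every x ∈ Ω. Set c = (1−σ)^{(1−σ)/(p−1)} and v(x) = c·u(x)^{1−σ}. Then v is twice continuously differentiable and positive on Ω and satisfies −Δv(x) ≥ v(x)^{(p−σ)/(1−σ)} for every x ∈ Ω. -/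
/-!
With `φ t = c t^(1-σ)` the chain rule `Δ(φ ∘ u) = φ'(u) Δu + φ''(u) ‖∇u‖²`, together with
`φ'(t) = c(1-σ) t^(-σ)` and `φ''(t) = -σ c(1-σ) t^(-σ-1)`, gives
`-Δv = c(1-σ) u^(-σ) (-Δu + σ‖∇u‖²/u) ≥ c(1-σ) u^(p-σ)`, and the constant `c` is chosen exactly so
that `c(1-σ) u^(p-σ) = v^((p-σ)/(1-σ))`.
-/

open MeasureTheory Filter Set

/-- The Euclidean Laplacian: the sum of the second partial derivatives. -/
noncomputable def lap {N : ℕ} (u : EuclideanSpace ℝ (Fin N) → ℝ)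
    (x : EuclideanSpace ℝ (Fin N)) : ℝ :=
  ∑ i : Fin N,
    fderiv ℝ (fun y => fderiv ℝ u y (EuclideanSpace.single i 1)) x (EuclideanSpace.single i 1)

open Topology

theorem fderiv_fderiv_comp_apply_apply {E : Type*} [NormedAddCommGroup E] [NormedSpace ℝ E]
    {φ : ℝ → ℝ} {u : E → ℝ} {x : E}
    (hφ : ContDiffAt ℝ 2 φ (u x)) (hu : ContDiffAt ℝ 2 u x) (e : E) :
    fderiv ℝ (fun y => fderiv ℝ (fun z => φ (u z)) y e) x e
      = deriv (deriv φ) (u x) * fderiv ℝ u x e ^ 2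
        + deriv φ (u x) * fderiv ℝ (fun y => fderiv ℝ u y e) x e := by
  have hfirst : (fun y => fderiv ℝ (fun z => φ (u z)) y e)
      =ᶠ[𝓝 x] fun y => deriv φ (u y) * fderiv ℝ u y e := by
    filter_upwards [hu.continuousAt.eventually (hφ.eventually (by simp)), hu.eventually (by simp)]
      with y hφy huy
    have hcomp : HasFDerivAt (fun z => φ (u z)) (deriv φ (u y) • fderiv ℝ u y) y :=
      (hφy.differentiableAt two_ne_zero).hasDerivAt.comp_hasFDerivAt y
        (huy.differentiableAt two_ne_zero).hasFDerivAt
    rw [hcomp.fderiv]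
    simp
  have hφ' : HasFDerivAt (fun y => deriv φ (u y)) (deriv (deriv φ) (u x) • fderiv ℝ u x) x :=
    ((hφ.derivWithin (m := 1) (by norm_num)).differentiableAt one_ne_zero).hasDerivAt
      |>.comp_hasFDerivAt x (hu.differentiableAt two_ne_zero).hasFDerivAt
  have hue : DifferentiableAt ℝ (fun y => fderiv ℝ u y e) x :=
    ((hu.fderiv_right (m := 1) (by norm_num)).differentiableAt one_ne_zero).clm_apply
      (differentiableAt_const e)
  have hprod : HasFDerivAt (fun y => deriv φ (u y) * fderiv ℝ u y e)
      (deriv φ (u x) • fderiv ℝ (fun y => fderiv ℝ u y e) x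
        + fderiv ℝ u x e • deriv (deriv φ) (u x) • fderiv ℝ u x) x :=
    hφ'.mul hue.hasFDerivAt
  rw [hfirst.fderiv_eq, hprod.fderiv]
  simp only [add_apply, smul_apply, smul_eq_mul]
  ring

section Laplacian

variable {N : ℕ}

theorem norm_gradient_sq_eq_sum (u : EuclideanSpace ℝ (Fin N) → ℝ) (x : EuclideanSpace ℝ (Fin N)) :
    ‖gradient u x‖ ^ 2 = ∑ i, fderiv ℝ u x (EuclideanSpace.single i 1) ^ 2 := by
  simp only [← inner_gradient_left, EuclideanSpace.inner_single_right]
  simp [EuclideanSpace.norm_sq_eq]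

theorem lap_comp {φ : ℝ → ℝ} {u : EuclideanSpace ℝ (Fin N) → ℝ} {x : EuclideanSpace ℝ (Fin N)}
    (hφ : ContDiffAt ℝ 2 φ (u x)) (hu : ContDiffAt ℝ 2 u x) :
    lap (fun y => φ (u y)) x
      = deriv φ (u x) * lap u x + deriv (deriv φ) (u x) * ‖gradient u x‖ ^ 2 := by
  simp only [lap, fderiv_fderiv_comp_apply_apply hφ hu, norm_gradient_sq_eq_sum,
    Finset.sum_add_distrib, Finset.mul_sum]
  ring

end Laplacian

theorem deriv_const_mul_rpow (c r : ℝ) :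
    deriv (fun t : ℝ => c * t ^ r) = fun t => c * r * t ^ (r - 1) := by
  rw [deriv_const_mul_field', Real.deriv_rpow_const']
  ext t
  ring

theorem change_of_unknown_rpow_eq {p σ t : ℝ} (hp : p ≠ 1) (hσ : σ < 1) (ht : 0 < t) :
    ((1 - σ) ^ ((1 - σ) / (p - 1)) * t ^ (1 - σ)) ^ ((p - σ) / (1 - σ))
      = (1 - σ) ^ ((1 - σ) / (p - 1)) * (1 - σ) * t ^ (-σ) * t ^ p := by
  have hσ' : 0 < 1 - σ := sub_pos.mpr hσ
  have hp' : p - 1 ≠ 0 := sub_ne_zero.mpr hp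
  have hc : ((1 - σ) ^ ((1 - σ) / (p - 1))) ^ ((p - σ) / (1 - σ))
      = (1 - σ) ^ ((1 - σ) / (p - 1)) * (1 - σ) := by
    rw [← Real.rpow_mul hσ'.le, ← Real.rpow_add_one hσ'.ne']
    congr 1
    field_simp
    ring
  have ht' : (t ^ (1 - σ)) ^ ((p - σ) / (1 - σ)) = t ^ (-σ) * t ^ p := by
    rw [← Real.rpow_mul ht.le, ← Real.rpow_add ht]
    congr 1
    field_simp
    ring
  rw [Real.mul_rpow (by positivity) (by positivity), hc, ht']
  ring

theorem change_of_unknown_supersolution_general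
    {N : ℕ} {Ω : Set (EuclideanSpace ℝ (Fin N))} (hΩ : IsOpen Ω)
    {p σ : ℝ} (hp : 1 < p) (hσ : σ < 1)
    (u : EuclideanSpace ℝ (Fin N) → ℝ)
    (hu : ContDiffOn ℝ 2 u Ω) (hupos : ∀ x ∈ Ω, 0 < u x)
    (heq : ∀ x ∈ Ω, u x ^ p ≤ -lap u x + σ * ‖gradient u x‖ ^ 2 / u x) :
    ContDiffOn ℝ 2
      (fun x => (1 - σ) ^ ((1 - σ) / (p - 1)) * u x ^ (1 - σ)) Ω ∧
    (∀ x ∈ Ω, 0 < (1 - σ) ^ ((1 - σ) / (p - 1)) * u x ^ (1 - σ)) ∧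
    (∀ x ∈ Ω,
      ((1 - σ) ^ ((1 - σ) / (p - 1)) * u x ^ (1 - σ)) ^ ((p - σ) / (1 - σ))
        ≤ -lap (fun x => (1 - σ) ^ ((1 - σ) / (p - 1)) * u x ^ (1 - σ)) x) := by
  set c := (1 - σ) ^ ((1 - σ) / (p - 1))
  have hφ : ∀ x ∈ Ω, ContDiffAt ℝ 2 (fun t => c * t ^ (1 - σ)) (u x) := fun x hx =>
    contDiffAt_const.mul (Real.contDiffAt_rpow_const_of_ne (hupos x hx).ne')
  have hux : ∀ x ∈ Ω, ContDiffAt ℝ 2 u x := fun x hx => hu.contDiffAt (hΩ.mem_nhds hx)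
  refine ⟨fun x hx => ((hφ x hx).comp x (hux x hx)).contDiffWithinAt,
    fun x hx => by have := hupos x hx; positivity, fun x hx => ?_⟩
  have hx0 := hupos x hx
  calc (c * u x ^ (1 - σ)) ^ ((p - σ) / (1 - σ))
      = c * (1 - σ) * u x ^ (-σ) * u x ^ p := change_of_unknown_rpow_eq hp.ne' hσ hx0
    _ ≤ c * (1 - σ) * u x ^ (-σ) * (-lap u x + σ * ‖gradient u x‖ ^ 2 / u x) := by
      gcongr
      exact heq x hx
    _ = -lap (fun x => c * u x ^ (1 - σ)) x := by
      rw [lap_comp (hφ x hx) (hux x hx), deriv_const_mul_rpow, deriv_const_mul_rpow,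
        show 1 - σ - 1 = -σ by ring]
      simp only [Real.rpow_sub_one hx0.ne']
      field_simp
      ring

theorem change_of_unknown_supersolution
    {N : ℕ} (hN : 3 ≤ N) {Ω : Set (EuclideanSpace ℝ (Fin N))} (hΩ : IsOpen Ω)
    {p σ : ℝ} (hp : 1 < p) (hσ : σ < 1)
    (u : EuclideanSpace ℝ (Fin N) → ℝ)
    (hu : ContDiffOn ℝ 2 u Ω) (hupos : ∀ x ∈ Ω, 0 < u x)
    (heq : ∀ x ∈ Ω, u x ^ p ≤ -lap u x + σ * ‖gradient u x‖ ^ 2 / u x) :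
    ContDiffOn ℝ 2
      (fun x => (1 - σ) ^ ((1 - σ) / (p - 1)) * u x ^ (1 - σ)) Ω ∧
    (∀ x ∈ Ω, 0 < (1 - σ) ^ ((1 - σ) / (p - 1)) * u x ^ (1 - σ)) ∧
    (∀ x ∈ Ω,
      ((1 - σ) ^ ((1 - σ) / (p - 1)) * u x ^ (1 - σ)) ^ ((p - σ) / (1 - σ))
        ≤ -lap (fun x => (1 - σ) ^ ((1 - σ) / (p - 1)) * u x ^ (1 - σ)) x) :=
  change_of_unknown_supersolution_general hΩ hp hσ u hu hupos heq
end

section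
/- Let s₀ ∈ (0,1) and let G : (0,s₀) → ℝ be Lebesgue integrable on (0,s₀) with G(r) ≥ 0 for almost every r ∈ (0,s₀). Then (1/δ)·∫₀^δ exp(∫_t^δ G(r) dr) dt → 1 as δ → 0⁺. -/
/-!
Write `F t = ∫ r in t..δ, G r`. Since `G ≥ 0`, for `0 ≤ t ≤ δ` we have
`0 ≤ F t ≤ ∫ r in 0..δ, G r`, so the average of `exp ∘ F` over `[0, δ]` lies between `1` and
`exp (∫ r in 0..δ, G r)`. The upper bound tends to `1` by absolute continuity of the integral.
-/

open MeasureTheory Filter Set Topology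

section IntegrableOnIoo

variable {G : ℝ → ℝ} {a b x y : ℝ}

lemma MeasureTheory.IntegrableOn.intervalIntegrable_of_Ioo (hG : IntegrableOn G (Ioo a b))
    (hax : a ≤ x) (hxy : x ≤ y) (hyb : y < b) : IntervalIntegrable G volume x y :=
  (intervalIntegrable_iff_integrableOn_Ioc_of_le hxy).2 <|
    hG.mono_set fun _ hr ↦ ⟨hax.trans_lt hr.1, hr.2.trans_lt hyb⟩

lemma intervalIntegral_nonneg_of_ae_restrict_Ioo (hG : ∀ᵐ r ∂volume.restrict (Ioo a b), 0 ≤ G r)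
    (hax : a ≤ x) (hxy : x ≤ y) (hyb : y < b) : 0 ≤ ∫ r in x..y, G r := by
  rw [intervalIntegral.integral_of_le hxy]
  have hsub : Ioc x y ⊆ Ioo a b := fun _ hr ↦ ⟨hax.trans_lt hr.1, hr.2.trans_lt hyb⟩
  exact integral_nonneg_of_ae (ae_restrict_of_ae_restrict_of_subset hsub hG)

lemma intervalIntegral_le_of_ae_restrict_Ioo (hG : IntegrableOn G (Ioo a b))
    (hG_nonneg : ∀ᵐ r ∂volume.restrict (Ioo a b), 0 ≤ G r) {t : ℝ}
    (hax : a ≤ x) (hxt : x ≤ t) (hty : t ≤ y) (hyb : y < b) :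
    ∫ r in t..y, G r ≤ ∫ r in x..y, G r := by
  rw [← intervalIntegral.integral_add_adjacent_intervals
    (hG.intervalIntegrable_of_Ioo hax hxt (hty.trans_lt hyb))
    (hG.intervalIntegrable_of_Ioo (hax.trans hxt) hty hyb)]
  linarith [intervalIntegral_nonneg_of_ae_restrict_Ioo hG_nonneg hax hxt (hty.trans_lt hyb)]

end IntegrableOnIoo

lemma tendsto_intervalIntegral_nhdsGT {E : Type*} [NormedAddCommGroup E] [NormedSpace ℝ E]
    {f : ℝ → E} {a b : ℝ} (hab : a < b) (hf : IntervalIntegrable f volume a b) :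
    Tendsto (fun x ↦ ∫ t in a..x, f t) (𝓝[>] a) (𝓝 0) := by
  have hcont := intervalIntegral.continuousOn_primitive_interval' hf left_mem_uIcc a left_mem_uIcc
  rw [uIcc_of_le hab.le] at hcont
  simpa using (hcont.mono_of_mem_nhdsWithin (Icc_mem_nhdsGT hab)).tendsto

section Average

variable {f : ℝ → ℝ} {a b : ℝ}

lemma le_inv_mul_intervalIntegral (hab : a < b) (hf : IntervalIntegrable f volume a b) {m : ℝ}
    (hm : ∀ t ∈ Icc a b, m ≤ f t) : m ≤ (b - a)⁻¹ * ∫ t in a..b, f t := by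
  have := intervalIntegral.integral_mono_on hab.le intervalIntegrable_const hf hm
  rw [intervalIntegral.integral_const, smul_eq_mul] at this
  rwa [le_inv_mul_iff₀ (sub_pos.2 hab)]

lemma inv_mul_intervalIntegral_le (hab : a < b) (hf : IntervalIntegrable f volume a b) {M : ℝ}
    (hM : ∀ t ∈ Icc a b, f t ≤ M) : (b - a)⁻¹ * ∫ t in a..b, f t ≤ M := by
  have := intervalIntegral.integral_mono_on hab.le hf intervalIntegrable_const hM
  rw [intervalIntegral.integral_const, smul_eq_mul] at this
  rwa [inv_mul_le_iff₀ (sub_pos.2 hab)]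

end Average

lemma average_exp_intervalIntegral_mem_Icc {G : ℝ → ℝ} {a b x y : ℝ}
    (hG : IntegrableOn G (Ioo a b)) (hG_nonneg : ∀ᵐ r ∂volume.restrict (Ioo a b), 0 ≤ G r)
    (hax : a ≤ x) (hxy : x < y) (hyb : y < b) :
    (y - x)⁻¹ * ∫ t in x..y, Real.exp (∫ r in t..y, G r) ∈
      Icc 1 (Real.exp (∫ r in x..y, G r)) := by
  have hint : IntervalIntegrable (fun t ↦ Real.exp (∫ r in t..y, G r)) volume x y := by
    refine ContinuousOn.intervalIntegrable <| Real.continuous_exp.comp_continuousOn <|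
      intervalIntegral.continuousOn_primitive_interval_left ?_
    rw [uIcc_of_le hxy.le, integrableOn_Icc_iff_integrableOn_Ioc]
    exact (hG.intervalIntegrable_of_Ioo hax hxy.le hyb).1
  refine ⟨le_inv_mul_intervalIntegral hxy hint fun t ht ↦ ?_,
    inv_mul_intervalIntegral_le hxy hint fun t ht ↦ ?_⟩
  · exact Real.one_le_exp <|
      intervalIntegral_nonneg_of_ae_restrict_Ioo hG_nonneg (hax.trans ht.1) ht.2 hyb
  · exact Real.exp_le_exp.2 <|
      intervalIntegral_le_of_ae_restrict_Ioo hG hG_nonneg hax ht.1 ht.2 hyb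

theorem average_exp_integral_tendsto_one
    {s₀ : ℝ} (hs₀ : s₀ ∈ Set.Ioo (0:ℝ) 1)
    (G : ℝ → ℝ) (hG : IntegrableOn G (Set.Ioo 0 s₀))
    (hG_nonneg : ∀ᵐ r ∂volume.restrict (Set.Ioo 0 s₀), 0 ≤ G r) :
    Filter.Tendsto
      (fun δ : ℝ => (1 / δ) * ∫ t in (0:ℝ)..δ, Real.exp (∫ r in t..δ, G r))
      (nhdsWithin 0 (Set.Ioi 0)) (nhds 1) := by
  have hs₀_pos : 0 < s₀ := hs₀.1
  have hupper : Tendsto (fun δ ↦ Real.exp (∫ r in (0:ℝ)..δ, G r)) (𝓝[>] 0) (𝓝 1) := by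
    have hhalf : (0 : ℝ) < s₀ / 2 := by positivity
    simpa only [Real.exp_zero] using (tendsto_intervalIntegral_nhdsGT hhalf <|
      hG.intervalIntegrable_of_Ioo le_rfl hhalf.le (half_lt_self hs₀_pos)).rexp
  have hbounds : ∀ᶠ δ in 𝓝[>] (0 : ℝ), (1 / δ) * ∫ t in (0:ℝ)..δ, Real.exp (∫ r in t..δ, G r) ∈
      Icc 1 (Real.exp (∫ r in (0:ℝ)..δ, G r)) := by
    filter_upwards [Ioo_mem_nhdsGT hs₀_pos] with δ hδ
    simpa using average_exp_intervalIntegral_mem_Icc hG hG_nonneg le_rfl hδ.1 hδ.2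
  exact tendsto_of_tendsto_of_tendsto_of_le_of_le' tendsto_const_nhds hupper
    (hbounds.mono fun _ h ↦ h.1) (hbounds.mono fun _ h ↦ h.2)
end
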